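/- arXiv:0809.0746 — 8 statements merged into one kernel-verified Lean document; each statement's English description precedes it below -/
import Mathlib

section
/- If a compact metric space X admits a uniformly bounded L^1-embedding with |i(x)(ω)| ≤ K for all x ∈ X and ω ∈ Ω, then M(X) ≤ K, i.e., for all n ∈ ℕ, all reals α₁,…,αₙ with Σαᵢ = 1 and all x₁,…,xₙ ∈ X, one has Σᵢⱼ αᵢαⱼ d(xᵢ,xⱼ) ≤ K. -/
/-!
Integrating the pointwise estimate over `Ω` reduces the theorem to the case of the interval
`[-K, K]` with its usual metric. There, the layer-cake formula
`|a - b| = ∫ t in Ioc (-K) K, |𝟙[t ≤ a] - 𝟙[t ≤ b]|` reduces it once more, to `{0, 1}`-valued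
points, for which `∑ₖₗ αₖ αₗ |gₖ - gₗ| = 2 S (1 - S) ≤ 1 / 2` with `S = ∑ₖ αₖ gₖ`.
-/

open MeasureTheory Set

section

variable {ι : Type*} [Fintype ι]

theorem sum_mul_mul_abs_sub_le_of_mem_zero_one (α g : ι → ℝ) (hα : ∑ k, α k = 1)
    (hg : ∀ k, g k = 0 ∨ g k = 1) :
    ∑ k, ∑ l, α k * α l * |g k - g l| ≤ 1 / 2 := by
  have habs : ∀ k l, |g k - g l| = g k + g l - 2 * (g k * g l) := by
    intro k l
    rcases hg k with hk | hk <;> rcases hg l with hl | hl <;> norm_num [hk, hl]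
  set S := ∑ k, α k * g k
  have hexpand : ∑ k, ∑ l, α k * α l * |g k - g l| = 2 * S * (1 - S) := by
    calc ∑ k, ∑ l, α k * α l * |g k - g l|
        = ∑ k, ∑ l, (α k * g k * α l + α k * (α l * g l) - 2 * (α k * g k) * (α l * g l)) := by
          refine Finset.sum_congr rfl fun k _ => Finset.sum_congr rfl fun l _ => ?_
          rw [habs]; ring
      _ = S * ∑ l, α l + (∑ k, α k) * S - 2 * S * S := by
          simp only [Finset.sum_sub_distrib, Finset.sum_add_distrib, ← Finset.mul_sum,
            ← Finset.sum_mul, S]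
      _ = 2 * S * (1 - S) := by rw [hα]; ring
  rw [hexpand]
  nlinarith [sq_nonneg (2 * S - 1)]

variable {Ω : Type*} [MeasurableSpace Ω] {μ : Measure Ω} [IsFiniteMeasure μ]

theorem sum_mul_mul_integral_abs_sub_le (α : ι → ℝ) {f : ι → Ω → ℝ}
    (hf : ∀ k, Integrable (f k) μ) {c : ℝ}
    (hc : ∀ ω, ∑ k, ∑ l, α k * α l * |f k ω - f l ω| ≤ c) :
    ∑ k, ∑ l, α k * α l * ∫ ω, |f k ω - f l ω| ∂μ ≤ μ.real univ * c := by
  have hint : ∀ k l, Integrable (fun ω => α k * α l * |f k ω - f l ω|) μ :=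
    fun k l => ((hf k).sub (hf l)).abs.const_mul _
  calc ∑ k, ∑ l, α k * α l * ∫ ω, |f k ω - f l ω| ∂μ
      = ∫ ω, ∑ k, ∑ l, α k * α l * |f k ω - f l ω| ∂μ := by
        rw [integral_finsetSum _ fun k _ => integrable_finsetSum _ fun l _ => hint k l]
        refine Finset.sum_congr rfl fun k _ => ?_
        rw [integral_finsetSum _ fun l _ => hint k l]
        simp only [integral_const_mul]
    _ ≤ ∫ _, c ∂μ :=
        integral_mono (integrable_finsetSum _ fun k _ => integrable_finsetSum _ fun l _ => hint k l)
          (integrable_const c) hc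
    _ = μ.real univ * c := by rw [integral_const, smul_eq_mul]


theorem abs_indicator_Iic_sub_indicator_Iic (a b t : ℝ) :
    |(Iic a).indicator 1 t - (Iic b).indicator 1 t| = (uIoc a b).indicator (1 : ℝ → ℝ) t := by
  by_cases ha : t ≤ a <;> by_cases hb : t ≤ b <;>
    simp [mem_uIoc, ha, hb, lt_iff_not_ge]

theorem abs_sub_eq_integral_abs_indicator_Iic_sub {K a b : ℝ} (ha : |a| ≤ K) (hb : |b| ≤ K) :
    |a - b| = ∫ t in Ioc (-K) K, |(Iic a).indicator 1 t - (Iic b).indicator 1 t| := by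
  have hsub : uIoc a b ⊆ Ioc (-K) K := by
    rw [uIoc]
    obtain ⟨ha₁, ha₂⟩ := abs_le.1 ha
    obtain ⟨hb₁, hb₂⟩ := abs_le.1 hb
    exact Ioc_subset_Ioc (le_min ha₁ hb₁) (max_le ha₂ hb₂)
  simp only [abs_indicator_Iic_sub_indicator_Iic]
  rw [integral_indicator_one measurableSet_uIoc, measureReal_restrict_apply measurableSet_uIoc,
    inter_eq_left.2 hsub, uIoc, Real.volume_real_Ioc_of_le min_le_max, max_sub_min_eq_abs']

theorem sum_mul_mul_abs_sub_le (α a : ι → ℝ) (hα : ∑ k, α k = 1)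
    {K : ℝ} (ha : ∀ k, |a k| ≤ K) :
    ∑ k, ∑ l, α k * α l * |a k - a l| ≤ K := by
  obtain ⟨k₀, -⟩ := Finset.nonempty_of_sum_ne_zero (hα.trans_ne one_ne_zero)
  have hK : 0 ≤ K := (abs_nonneg _).trans (ha k₀)
  have hlayer := sum_mul_mul_integral_abs_sub_le (μ := volume.restrict (Ioc (-K) K)) α
    (f := fun k => (Iic (a k)).indicator 1)
    (fun k => (integrable_const 1).indicator measurableSet_Iic) (c := 1 / 2)
    fun t => sum_mul_mul_abs_sub_le_of_mem_zero_one α _ hα fun k => by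
      by_cases h : t ≤ a k <;> simp [h]
  simp only [← abs_sub_eq_integral_abs_indicator_Iic_sub (ha _) (ha _)] at hlayer
  rwa [measureReal_restrict_apply_univ, Real.volume_real_Ioc_of_le (by linarith),
    show (K - -K) * (1 / 2) = K by ring] at hlayer

end

theorem bounded_l1_embedding_implies_M_le_general
    {X : Type*} [MetricSpace X]
    {Ω : Type*} [MeasurableSpace Ω] (P : Measure Ω) [IsProbabilityMeasure P]
    (i : X → Ω → ℝ)
    (hint : ∀ x : X, Integrable (i x) P)
    (hiso : ∀ x y : X, dist x y = ∫ ω, |i x ω - i y ω| ∂P)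
    (K : ℝ) (hK : ∀ (x : X) (ω : Ω), |i x ω| ≤ K) :
    ∀ (n : ℕ) (α : Fin n → ℝ), (∑ k, α k) = 1 →
      ∀ x : Fin n → X,
        ∑ k, ∑ l, α k * α l * dist (x k) (x l) ≤ K := by
  intro n α hα x
  simpa [hiso] using sum_mul_mul_integral_abs_sub_le (μ := P) α (fun k => hint (x k))
    fun ω => sum_mul_mul_abs_sub_le α (fun k => i (x k) ω) hα fun k => hK (x k) ω

theorem bounded_l1_embedding_implies_M_le
    {X : Type*} [MetricSpace X] [CompactSpace X]
    {Ω : Type*} [MeasurableSpace Ω] (P : Measure Ω) [IsProbabilityMeasure P]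
    (i : X → Ω → ℝ)
    (hint : ∀ x : X, Integrable (i x) P)
    (hiso : ∀ x y : X, dist x y = ∫ ω, |i x ω - i y ω| ∂P)
    (K : ℝ) (hK : ∀ (x : X) (ω : Ω), |i x ω| ≤ K) :
    ∀ (n : ℕ) (α : Fin n → ℝ), (∑ k, α k) = 1 →
      ∀ x : Fin n → X,
        ∑ k, ∑ l, α k * α l * dist (x k) (x l) ≤ K :=
  bounded_l1_embedding_implies_M_le_general P i hint hiso K hK
end

section
/- For the closed interval [−K, K] in ℝ, any reals x₁,…,xₙ ∈ [−K,K] and weights α₁,…,αₙ with Σαᵢ = 1 satisfy Σᵢⱼ αᵢαⱼ |xᵢ − xⱼ| ≤ K. -/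
/-!
Layer-cake representation: for `x, y ∈ [a, b]`,
`|x - y| = ∫ t in a..b, (1_{t ≤ x} - 1_{t ≤ y}) ^ 2`.
Summing against `α k * α l` and using `∑ α = 1` and `u ^ 2 = u` for indicators, the integrand
becomes `2 F (1 - F)` with `F t = ∑ k, α k * 1_{t ≤ x k}`. Since `2 F (1 - F) ≤ 1 / 2` for every
real `F` (the weights may be negative), the double sum is at most `(b - a) / 2`.
-/

open MeasureTheory Set

lemma sum_sum_mul_mul_sub_sq {ι : Type*} [Fintype ι] (α u : ι → ℝ) (hα : ∑ k, α k = 1) :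
    ∑ k, ∑ l, α k * α l * (u k - u l) ^ 2 =
      2 * ∑ k, α k * u k ^ 2 - 2 * (∑ k, α k * u k) ^ 2 := by
  have expand : ∀ k l, α k * α l * (u k - u l) ^ 2 =
      α l * (α k * u k ^ 2) + α k * (α l * u l ^ 2) - 2 * (α k * u k) * (α l * u l) := by
    intro k l; ring
  simp only [expand, Finset.sum_sub_distrib, Finset.sum_add_distrib, ← Finset.mul_sum,
    ← Finset.sum_mul, hα]
  ring

lemma indicator_Iic_sub_sq (a b t : ℝ) :
    ((Iic a).indicator (1 : ℝ → ℝ) t - (Iic b).indicator 1 t) ^ 2 =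
      (Iic a).indicator 1 t + (Iic b).indicator 1 t - 2 * (Iic (min a b)).indicator 1 t := by
  by_cases ha : t ≤ a <;> by_cases hb : t ≤ b <;> norm_num [ha, hb]

lemma intervalIntegral.integral_indicator_Iic_one {a b c : ℝ} (hc : c ∈ Icc a b) :
    ∫ t in a..b, (Iic c).indicator (1 : ℝ → ℝ) t = c - a :=
  (intervalIntegral.integral_indicator (f := 1) hc).trans (by simp)

lemma intervalIntegrable_indicator_Iic_one (a b c : ℝ) :
    IntervalIntegrable ((Iic c).indicator (1 : ℝ → ℝ)) volume a b :=
  Antitone.intervalIntegrable fun s t hst ↦ by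
    by_cases ht : t ≤ c
    · simp [ht, hst.trans ht]
    · simp only [indicator_of_notMem (show t ∉ Iic c from ht)]
      exact indicator_nonneg (fun _ _ ↦ zero_le_one) s

lemma intervalIntegrable_indicator_Iic_sub_sq (a b x y : ℝ) :
    IntervalIntegrable (fun t ↦ ((Iic x).indicator (1 : ℝ → ℝ) t - (Iic y).indicator 1 t) ^ 2)
      volume a b := by
  simp only [indicator_Iic_sub_sq]
  exact ((intervalIntegrable_indicator_Iic_one a b x).add
    (intervalIntegrable_indicator_Iic_one a b y)).sub
    ((intervalIntegrable_indicator_Iic_one a b _).const_mul 2)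

lemma abs_sub_eq_integral_indicator_Iic_sub_sq {a b x y : ℝ} (hx : x ∈ Icc a b)
    (hy : y ∈ Icc a b) :
    |x - y| = ∫ t in a..b, ((Iic x).indicator (1 : ℝ → ℝ) t - (Iic y).indicator 1 t) ^ 2 := by
  have hmin : min x y ∈ Icc a b := ⟨le_min hx.1 hy.1, (min_le_left x y).trans hx.2⟩
  have hint := intervalIntegrable_indicator_Iic_one a b
  simp only [indicator_Iic_sub_sq]
  rw [intervalIntegral.integral_sub ((hint x).add (hint y)) ((hint _).const_mul 2),
    intervalIntegral.integral_add (hint x) (hint y), intervalIntegral.integral_const_mul,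
    intervalIntegral.integral_indicator_Iic_one hx, intervalIntegral.integral_indicator_Iic_one hy,
    intervalIntegral.integral_indicator_Iic_one hmin]
  rcases le_total x y with h | h
  · rw [min_eq_left h, abs_of_nonpos (by linarith)]; ring
  · rw [min_eq_right h, abs_of_nonneg (by linarith)]; ring

theorem sum_sum_mul_mul_abs_sub_le {ι : Type*} [Fintype ι] {a b : ℝ} {x : ι → ℝ}
    (hx : ∀ k, x k ∈ Icc a b) {α : ι → ℝ} (hα : ∑ k, α k = 1) :
    ∑ k, ∑ l, α k * α l * |x k - x l| ≤ (b - a) / 2 := by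
  have hab : a ≤ b := by
    cases isEmpty_or_nonempty ι with
    | inl _ => simp at hα
    | inr h => obtain ⟨k⟩ := h; exact (hx k).1.trans (hx k).2
  set s : ι → ℝ → ℝ := fun k t ↦ (Iic (x k)).indicator 1 t
  set g : ι → ι → ℝ → ℝ := fun k l t ↦ α k * α l * (s k t - s l t) ^ 2
  have hg : ∀ k l, IntervalIntegrable (g k l) volume a b := fun k l ↦
    (intervalIntegrable_indicator_Iic_sub_sq a b (x k) (x l)).const_mul _
  have hrow : ∀ k, IntervalIntegrable (fun t ↦ ∑ l, g k l t) volume a b := fun k ↦ by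
    simpa only [Finset.sum_fn] using IntervalIntegrable.sum Finset.univ fun l _ ↦ hg k l
  have hsum : IntervalIntegrable (fun t ↦ ∑ k, ∑ l, g k l t) volume a b := by
    simpa only [Finset.sum_fn] using IntervalIntegrable.sum Finset.univ fun k _ ↦ hrow k
  have hpoint : ∀ t, ∑ k, ∑ l, g k l t ≤ 1 / 2 := fun t ↦ by
    have hidem : ∀ k, s k t ^ 2 = s k t := fun k ↦ by
      simp only [s, indicator_apply, Pi.one_apply]; split_ifs <;> norm_num
    simp only [g, sum_sum_mul_mul_sub_sq α (s · t) hα, hidem]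
    nlinarith [sq_nonneg (∑ k, α k * s k t - 1 / 2)]
  calc ∑ k, ∑ l, α k * α l * |x k - x l|
      = ∑ k, ∑ l, ∫ t in a..b, g k l t := by
        simp only [g, s, intervalIntegral.integral_const_mul,
          ← abs_sub_eq_integral_indicator_Iic_sub_sq (hx _) (hx _)]
    _ = ∫ t in a..b, ∑ k, ∑ l, g k l t := by
        rw [intervalIntegral.integral_finsetSum fun k _ ↦ hrow k]
        simp only [intervalIntegral.integral_finsetSum fun l _ ↦ hg _ l]
    _ ≤ ∫ _ in a..b, (1 / 2 : ℝ) :=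
        intervalIntegral.integral_mono_on hab hsum intervalIntegrable_const fun t _ ↦ hpoint t
    _ = (b - a) / 2 := by rw [intervalIntegral.integral_const, smul_eq_mul]; ring

theorem interval_M_bound (K : ℝ) (n : ℕ) (x : Fin n → ℝ)
    (hx : ∀ k, x k ∈ Set.Icc (-K) K)
    (α : Fin n → ℝ) (hα : (∑ k, α k) = 1) :
    ∑ k, ∑ l, α k * α l * |x k - x l| ≤ K := by
  have := sum_sum_mul_mul_abs_sub_le hx hα
  rwa [sub_neg_eq_add, ← two_mul, mul_div_cancel_left₀ K two_ne_zero] at this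
end

section
/- Let X = {x₁,…,xₙ} be a finite metric space S-embedded on a sphere of radius r in a euclidean space, i.e., there are points y₁,…,yₙ with ‖yᵢ − yⱼ‖² = d(xᵢ,xⱼ) and all yᵢ at distance r from a common center. Then M(X) ≤ 2r²: for all real weights wᵢ with Σwᵢ = 1, Σᵢⱼ wᵢwⱼ d(xᵢ,xⱼ) ≤ 2r². -/
/-!
With `zₖ = yₖ - c`, `‖zₖ - zₗ‖² = 2r² - 2⟪zₖ, zₗ⟫`, so for weights of total mass one
`∑ wₖ wₗ d(xₖ, xₗ) = 2r² - 2‖∑ wₖ zₖ‖² ≤ 2r²`.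
-/

open Finset

section

variable {F : Type*} [NormedAddCommGroup F] [InnerProductSpace ℝ F] {ι : Type*} [Fintype ι]

theorem norm_sum_smul_sq (w : ι → ℝ) (z : ι → F) :
    ‖∑ k, w k • z k‖ ^ 2 = ∑ k, ∑ l, w k * w l * inner ℝ (z k) (z l) := by
  rw [← real_inner_self_eq_norm_sq, sum_inner]
  simp_rw [inner_sum, real_inner_smul_left, real_inner_smul_right, mul_assoc]

theorem sum_sum_mul_norm_sub_sq (w : ι → ℝ) (z : ι → F) :
    ∑ k, ∑ l, w k * w l * ‖z k - z l‖ ^ 2 =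
      2 * (∑ k, w k) * ∑ k, w k * ‖z k‖ ^ 2 - 2 * ‖∑ k, w k • z k‖ ^ 2 := by
  have hexpand (k l : ι) : w k * w l * ‖z k - z l‖ ^ 2 =
      w k * ‖z k‖ ^ 2 * w l + w k * (w l * ‖z l‖ ^ 2) - 2 * (w k * w l * inner ℝ (z k) (z l)) := by
    rw [norm_sub_sq_real]; ring
  simp_rw [hexpand, sum_sub_distrib, sum_add_distrib, ← mul_sum, ← sum_mul, norm_sum_smul_sq]
  ring

theorem sum_sum_mul_norm_sub_sq_le_of_norm_sub_eq {w : ι → ℝ} (hw : ∑ k, w k = 1) {y : ι → F}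
    {c : F} {r : ℝ} (hy : ∀ k, ‖y k - c‖ = r) :
    ∑ k, ∑ l, w k * w l * ‖y k - y l‖ ^ 2 ≤ 2 * r ^ 2 := by
  have h := sum_sum_mul_norm_sub_sq w (fun k => y k - c)
  simp only [sub_sub_sub_cancel_right, hy, ← sum_mul, hw] at h
  nlinarith [sq_nonneg ‖∑ k, w k • (y k - c)‖]

end

theorem s_embedding_on_sphere_M_le_general
    {X : Type*} [MetricSpace X] (n m : ℕ)
    (x : Fin n → X)
    (y : Fin n → EuclideanSpace ℝ (Fin m))
    (c : EuclideanSpace ℝ (Fin m)) (r : ℝ)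
    (hsphere : ∀ k, ‖y k - c‖ = r)
    (hemb : ∀ k l, ‖y k - y l‖ ^ 2 = dist (x k) (x l)) :
    ∀ w : Fin n → ℝ, (∑ k, w k) = 1 →
      ∑ k, ∑ l, w k * w l * dist (x k) (x l) ≤ 2 * r ^ 2 := by
  intro w hw
  simp_rw [← hemb]
  exact sum_sum_mul_norm_sub_sq_le_of_norm_sub_eq hw hsphere

theorem s_embedding_on_sphere_M_le
    {X : Type*} [MetricSpace X] (n m : ℕ)
    (x : Fin n → X) (hx : Function.Bijective x)
    (y : Fin n → EuclideanSpace ℝ (Fin m))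
    (c : EuclideanSpace ℝ (Fin m)) (r : ℝ)
    (hsphere : ∀ k, ‖y k - c‖ = r)
    (hemb : ∀ k l, ‖y k - y l‖ ^ 2 = dist (x k) (x l)) :
    ∀ w : Fin n → ℝ, (∑ k, w k) = 1 →
      ∑ k, ∑ l, w k * w l * dist (x k) (x l) ≤ 2 * r ^ 2 :=
  s_embedding_on_sphere_M_le_general n m x y c r hsphere hemb
end

section
/- Let X = {x₁,…,xₙ} be S-embedded as points y₁,…,yₙ on a sphere of radius r centered at the origin in ℝ^m with affine hull equal to ℝ^m. Then M⁺(X) = 2(r² − s²), where s = inf{ ‖Σᵢ wᵢyᵢ‖ : wᵢ ≥ 0, Σwᵢ = 1 } is the distance from the origin to the convex hull of the yᵢ. -/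
/-!
Expanding squared distances gives the weighted variance identity
`∑ₖₗ wₖ wₗ ‖yₖ - yₗ‖² = 2 (∑ₖ wₖ ‖yₖ‖² - ‖∑ₖ wₖ yₖ‖²)` for weights summing to one. On a sphere of
radius `r` the first term is `r²`, so `M⁺(X)` is the supremum of `2 (r² - ‖c‖²)` over the points `c`
of the convex hull. Since `t ↦ 2 (r² - t²)` is continuous and decreasing on `[0, ∞)`, it turns the
infimum `s` of `‖c‖` into that supremum.
-/

theorem Finset.sum_sum_mul_norm_sub_sq {ι E : Type*} [NormedAddCommGroup E]
    [InnerProductSpace ℝ E] (s : Finset ι) (w : ι → ℝ) (hw : ∑ k ∈ s, w k = 1) (y : ι → E) :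
    ∑ k ∈ s, ∑ l ∈ s, w k * w l * ‖y k - y l‖ ^ 2 =
      2 * (∑ k ∈ s, w k * ‖y k‖ ^ 2 - ‖∑ k ∈ s, w k • y k‖ ^ 2) := by
  have hsq : ‖∑ k ∈ s, w k • y k‖ ^ 2 = ∑ k ∈ s, ∑ l ∈ s, w k * w l * inner ℝ (y k) (y l) := by
    simp_rw [← real_inner_self_eq_norm_sq, sum_inner, inner_sum, real_inner_smul_left,
      real_inner_smul_right, mul_assoc]
  have hexp : ∀ k l, w k * w l * ‖y k - y l‖ ^ 2 =
      w l * (w k * ‖y k‖ ^ 2) + w k * (w l * ‖y l‖ ^ 2) - 2 * (w k * w l * inner ℝ (y k) (y l)) := by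
    intro k l
    rw [norm_sub_sq_real]
    ring
  simp only [hexp, hsq, Finset.sum_sub_distrib, Finset.sum_add_distrib, ← Finset.sum_mul,
    ← Finset.mul_sum, hw]
  ring

theorem IsGLB.isLUB_image_two_mul_sq_sub {S : Set ℝ} {s : ℝ} (hs : IsGLB S s)
    (hS : ∀ t ∈ S, 0 ≤ t) (r : ℝ) :
    IsLUB ((fun t => 2 * (r ^ 2 - t ^ 2)) '' S) (2 * (r ^ 2 - s ^ 2)) := by
  refine hs.isLUB_of_tendsto ?_ hs.nonempty ?_
  · intro a ha b _ hab
    have ha0 := hS a ha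
    dsimp only
    nlinarith
  · exact ((continuous_const.sub (continuous_pow 2)).const_mul 2 |>.tendsto s).mono_left
      nhdsWithin_le_nhds

theorem s_embedding_minimal_dim_Mplus_eq_general
    {X : Type*} [MetricSpace X] (n m : ℕ)
    (x : Fin n → X)
    (y : Fin n → EuclideanSpace ℝ (Fin m))
    (r : ℝ) (hsphere : ∀ k, ‖y k‖ = r)
    (hemb : ∀ k l, ‖y k - y l‖ ^ 2 = dist (x k) (x l))
    (s : ℝ)
    (hs : IsGLB {t : ℝ | ∃ w : Fin n → ℝ, (∀ k, 0 ≤ w k) ∧ (∑ k, w k) = 1 ∧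
        t = ‖∑ k, w k • y k‖} s) :
    IsLUB {t : ℝ | ∃ w : Fin n → ℝ, (∀ k, 0 ≤ w k) ∧ (∑ k, w k) = 1 ∧
        t = ∑ k, ∑ l, w k * w l * dist (x k) (x l)} (2 * (r ^ 2 - s ^ 2)) := by
  have hMplus : ∀ w : Fin n → ℝ, ∑ k, w k = 1 →
      ∑ k, ∑ l, w k * w l * dist (x k) (x l) = 2 * (r ^ 2 - ‖∑ k, w k • y k‖ ^ 2) := by
    intro w hw
    simp only [← hemb, Finset.univ.sum_sum_mul_norm_sub_sq w hw, hsphere, ← Finset.sum_mul, hw,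
      one_mul]
  convert hs.isLUB_image_two_mul_sq_sub (by rintro _ ⟨w, -, -, rfl⟩; exact norm_nonneg _) r using 1
  ext t
  constructor
  · rintro ⟨w, hw0, hw1, rfl⟩
    exact ⟨_, ⟨w, hw0, hw1, rfl⟩, (hMplus w hw1).symm⟩
  · rintro ⟨_, ⟨w, hw0, hw1, rfl⟩, rfl⟩
    exact ⟨w, hw0, hw1, (hMplus w hw1).symm⟩

theorem s_embedding_minimal_dim_Mplus_eq
    {X : Type*} [MetricSpace X] (n m : ℕ)
    (x : Fin n → X) (hx : Function.Bijective x)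
    (y : Fin n → EuclideanSpace ℝ (Fin m))
    (r : ℝ) (hsphere : ∀ k, ‖y k‖ = r)
    (hemb : ∀ k l, ‖y k - y l‖ ^ 2 = dist (x k) (x l))
    (hspan : affineSpan ℝ (Set.range y) = ⊤)
    (s : ℝ)
    (hs : IsGLB {t : ℝ | ∃ w : Fin n → ℝ, (∀ k, 0 ≤ w k) ∧ (∑ k, w k) = 1 ∧
        t = ‖∑ k, w k • y k‖} s) :
    IsLUB {t : ℝ | ∃ w : Fin n → ℝ, (∀ k, 0 ≤ w k) ∧ (∑ k, w k) = 1 ∧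
        t = ∑ k, ∑ l, w k * w l * dist (x k) (x l)} (2 * (r ^ 2 - s ^ 2)) :=
  s_embedding_minimal_dim_Mplus_eq_general n m x y r hsphere hemb s hs
end

section
/- Let (X,d) be a compact metric space with M(X) < ∞. Then there exists a map i of X into a (separable) Hilbert space such that ‖i(x)‖ = (M(X)/2)^{1/2} for all x ∈ X and ‖i(x) − i(y)‖² = d(x,y) for all x,y ∈ X. In particular, every such X admits an S-embedding onto a sphere of radius (M(X)/2)^{1/2}. -/
/-!
Let `M = sup S` and `K x y = (M - d x y) / 2`. Testing the supremum on the finitely supported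
signed measures `c` of total mass one (split into positive and negative parts `P`, `N`) gives
`∑∑ c x c y d x y ≤ M (∑ c)²` for every finitely supported `c`: by rescaling when `∑ c ≠ 0`, and
when `∑ c = 0` because the energy of `δₓ + t c` is a quadratic in `t`, bounded above, with leading
coefficient the energy of `c`. Hence `K` is a positive semidefinite kernel, and its reproducing
kernel Hilbert space contains vectors `eₓ` with `⟪eₓ, e_y⟫ = K x y`, i.e. `‖eₓ‖² = M / 2` and
`‖eₓ - e_y‖² = d x y`. As `x ↦ eₓ` is continuous and `X` is separable, so is that Hilbert space,
and it embeds isometrically into `ℓ²(ℕ)`.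
-/

open Function TopologicalSpace RKHS Submodule Set Finsupp MeasureTheory
open scoped ENNReal InnerProductSpace lp

section ExtendByZero

variable {α β 𝕜 E : Type*} [NormedAddCommGroup E] {f : α → β}

theorem norm_rpow_extend_zero {q : ℝ} (hq : q ≠ 0) (g : α → E) :
    (fun b => ‖extend f g 0 b‖ ^ q) = extend f (fun a => ‖g a‖ ^ q) 0 := by
  ext b
  rw [apply_extend (fun v : E => ‖v‖ ^ q)]
  congr 1
  ext
  simp [Real.zero_rpow hq]

theorem Memℓp.extend_zero (hf : Injective f) {p : ℝ≥0∞} (hp : 0 < p.toReal) {g : α → E}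
    (hg : Memℓp g p) : Memℓp (extend f g 0) p := by
  rw [memℓp_gen_iff hp] at hg ⊢
  rw [norm_rpow_extend_zero hp.ne']
  exact (summable_extend_zero hf).2 hg

variable [NormedField 𝕜] [NormedSpace 𝕜 E] {p : ℝ≥0∞} [Fact (1 ≤ p)]

noncomputable def lp.extendByZero (hf : Injective f) (hp : 0 < p.toReal) :
    lp (fun _ : α => E) p →ₗᵢ[𝕜] lp (fun _ : β => E) p where
  toFun g := ⟨extend f g 0, (lp.memℓp g).extend_zero hf hp⟩
  map_add' g₁ g₂ := lp.ext <| show extend f ⇑(g₁ + g₂) 0 = extend f g₁ 0 + extend f g₂ 0 by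
    rw [lp.coeFn_add, ← extend_add, add_zero]
  map_smul' c g := lp.ext <| show extend f ⇑(c • g) 0 = c • extend f g 0 by
    rw [lp.coeFn_smul, ← extend_smul, smul_zero]
  norm_map' g := by
    rw [lp.norm_eq_tsum_rpow hp, lp.norm_eq_tsum_rpow hp]
    show (∑' b, ‖extend f g 0 b‖ ^ p.toReal) ^ (1 / p.toReal) = _
    rw [norm_rpow_extend_zero hp.ne', tsum_extend_zero hf]

end ExtendByZero

section SeparableHilbertSpace

variable {𝕜 E : Type*} [RCLike 𝕜] [NormedAddCommGroup E] [InnerProductSpace 𝕜 E]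

theorem Orthonormal.countable [SeparableSpace E] {ι : Type*} {v : ι → E}
    (hv : Orthonormal 𝕜 v) : Countable ι := by
  refine Pairwise.countable_of_isOpen_disjoint (s := fun i => Metric.ball (v i) (1 / 2))
    (fun i j hij => Metric.ball_disjoint_ball ?_) (fun _ => Metric.isOpen_ball)
    (fun i => Metric.nonempty_ball.2 one_half_pos)
  have hdist : ‖v i - v j‖ ^ 2 = 2 := by
    rw [@norm_sub_sq 𝕜, hv.1 i, hv.1 j, hv.2 hij]
    norm_num
  rw [dist_eq_norm]
  nlinarith [norm_nonneg (v i - v j)]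

variable (𝕜 E) in
theorem exists_linearIsometry_lp_nat [CompleteSpace E] [SeparableSpace E] :
    Nonempty (E →ₗᵢ[𝕜] ℓ²(ℕ, 𝕜)) := by
  obtain ⟨w, b, hb⟩ := exists_hilbertBasis 𝕜 E
  have : Countable w := (hb ▸ b.orthonormal).countable
  obtain ⟨f, hf⟩ := countable_iff_exists_injective w |>.1 this
  exact ⟨(lp.extendByZero hf (by norm_num)).comp b.repr.toLinearIsometry⟩

theorem TopologicalSpace.SeparableSpace.of_dense_span_range {X : Type*} [TopologicalSpace X]
    [SeparableSpace X] {e : X → E} (he : Continuous e) (h : Dense (span 𝕜 (range e) : Set E)) :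
    SeparableSpace E := by
  rw [← isSeparable_univ_iff, ← h.closure_eq]
  exact (isSeparable_range he).span.closure

end SeparableHilbertSpace

section PositiveSemidefiniteKernel

variable {X : Type*}

theorem continuous_of_continuous_inner [TopologicalSpace X] {E : Type*}
    [NormedAddCommGroup E] [InnerProductSpace ℝ E] {e : X → E}
    (h : Continuous fun p : X × X => ⟪e p.1, e p.2⟫_ℝ) : Continuous e := by
  refine continuous_iff_continuousAt.2 fun x => tendsto_iff_norm_sub_tendsto_zero.2 ?_
  have hnorm : ∀ y, ‖e y - e x‖ = √(⟪e y, e y⟫_ℝ - 2 * ⟪e y, e x⟫_ℝ + ⟪e x, e x⟫_ℝ) :=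
    fun y => by
      rw [real_inner_self_eq_norm_sq, real_inner_self_eq_norm_sq, ← norm_sub_sq_real,
        Real.sqrt_sq (norm_nonneg _)]
  have hcont : Continuous fun y => ⟪e y, e y⟫_ℝ - 2 * ⟪e y, e x⟫_ℝ + ⟪e x, e x⟫_ℝ := by
    have hdiag := h.comp (continuous_id.prodMk continuous_id)
    have hx := h.comp (continuous_id.prodMk (continuous_const (y := x)))
    exact (hdiag.sub (continuous_const.mul hx)).add continuous_const
  have hlim := hcont.sqrt.tendsto x
  rwa [show ⟪e x, e x⟫_ℝ - 2 * ⟪e x, e x⟫_ℝ + ⟪e x, e x⟫_ℝ = 0 by ring, Real.sqrt_zero,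
    ← funext hnorm] at hlim

theorem RKHS.dense_span_range_kerFun_one {𝕜 H : Type*} [RCLike 𝕜] [NormedAddCommGroup H]
    [InnerProductSpace 𝕜 H] [CompleteSpace H] [RKHS 𝕜 H X 𝕜] :
    Dense (span 𝕜 (range fun x => kerFun H x 1) : Set H) := by
  refine dense_iff_topologicalClosure_eq_top.2 <|
    eq_top_mono (topologicalClosure_mono (span_le.2 ?_)) (kerFun_dense H)
  rintro _ ⟨x, v, rfl⟩
  rw [← mul_one v, ← smul_eq_mul, map_smul]
  exact smul_mem _ v (subset_span (mem_range_self x))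

theorem Matrix.PosSemidef.map_algebraMap {K : Matrix X X ℝ} (hK : K.PosSemidef) :
    (K.map (algebraMap ℝ (ℝ →L[ℝ] ℝ))).PosSemidef := by
  have htfae := (posSemidef_tfae (𝕜 := ℝ) (K := K.map (algebraMap ℝ (ℝ →L[ℝ] ℝ)))).out 0 2
  refine htfae.2 ⟨?_, fun c => ?_⟩
  · ext1 x y
    simpa [← algebraMap_star_comm] using hK.isHermitian.apply x y
  · refine (hK.2 c).trans_eq ?_
    rw [Finsupp.sum_comm]
    simp [mul_comm, mul_left_comm]

theorem Matrix.PosSemidef.exists_lp_inner_eq [TopologicalSpace X] [SeparableSpace X]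
    {K : Matrix X X ℝ} (hK : K.PosSemidef) (hcont : Continuous fun p : X × X => K p.1 p.2) :
    ∃ i : X → ℓ²(ℕ, ℝ), ∀ x y, ⟪i x, i y⟫_ℝ = K x y := by
  -- `RKHS.OfKernel` takes operator-valued kernels; a real kernel acts by multiplication.
  let K' := K.map (algebraMap ℝ (ℝ →L[ℝ] ℝ))
  have : Fact K'.PosSemidef := ⟨hK.map_algebraMap⟩
  let e x := kerFun (OfKernel K') x 1
  have he : ∀ x y, ⟪e x, e y⟫_ℝ = K x y := fun x y => by
    rw [← kernel_inner, OfKernel.kernel_ofKernel]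
    simpa [K'] using hK.isHermitian.apply x y
  have : SeparableSpace (OfKernel K') :=
    .of_dense_span_range (continuous_of_continuous_inner (hcont.congr fun p => (he p.1 p.2).symm))
      dense_span_range_kerFun_one
  obtain ⟨T⟩ := exists_linearIsometry_lp_nat ℝ (OfKernel K')
  exact ⟨T ∘ e, fun x y => by simp [T.inner_map_map, he]⟩

end PositiveSemidefiniteKernel

section Energy

variable {X : Type*}

noncomputable def totalMass : (X →₀ ℝ) →ₗ[ℝ] ℝ := linearCombination ℝ fun _ => 1

noncomputable def energyForm (D : X → X → ℝ) : LinearMap.BilinForm ℝ (X →₀ ℝ) :=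
  linearCombination ℝ fun x => linearCombination ℝ (D x)

theorem totalMass_apply (c : X →₀ ℝ) : totalMass c = c.sum fun _ a => a := by
  simp [totalMass, linearCombination_apply]

theorem energyForm_apply (D : X → X → ℝ) (c c' : X →₀ ℝ) :
    energyForm D c c' = c.sum fun x a => c'.sum fun y b => a * D x y * b := by
  simp [energyForm, linearCombination_apply, LinearMap.finsupp_sum_apply, Finsupp.mul_sum,
    mul_comm, mul_left_comm]

theorem nonpos_of_forall_quadratic_le {a b c B : ℝ} (h : ∀ t : ℝ, a + b * t + c * t ^ 2 ≤ B) :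
    c ≤ 0 := by
  by_contra! hc
  set t := max 1 ((|b| + |B - a| + 1) / c)
  have ht1 : 1 ≤ t := le_max_left _ _
  have ht0 : 0 ≤ t := zero_le_one.trans ht1
  have htc : |b| + |B - a| + 1 ≤ c * t := by
    rw [mul_comm, ← div_le_iff₀ hc]
    exact le_max_right _ _
  nlinarith [h t, mul_le_mul_of_nonneg_left htc ht0, mul_le_mul_of_nonneg_right (neg_abs_le b) ht0,
    mul_nonneg (sub_nonneg.2 ht1) (abs_nonneg (B - a)), le_abs_self (B - a)]

theorem energyForm_le_mul_totalMass_sq {D : X → X → ℝ} {M : ℝ}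
    (hM : ∀ c, totalMass c = 1 → energyForm D c c ≤ M) (c : X →₀ ℝ) :
    energyForm D c c ≤ M * totalMass c ^ 2 := by
  rcases eq_or_ne (totalMass c) 0 with h0 | h0
  · rcases eq_or_ne c 0 with rfl | hc
    · simp
    obtain ⟨x, -⟩ := support_nonempty_iff.2 hc
    have hquad : ∀ t : ℝ, energyForm D (single x 1) (single x 1) +
        (energyForm D (single x 1) c + energyForm D c (single x 1)) * t +
        energyForm D c c * t ^ 2 ≤ M := fun t => by
      have := hM (single x 1 + t • c) (by rw [map_add, map_smul, h0]; simp [totalMass])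
      simp only [map_add, map_smul, LinearMap.add_apply, LinearMap.smul_apply, smul_eq_mul] at this
      linarith
    simpa [h0] using nonpos_of_forall_quadratic_le hquad
  · have := hM ((totalMass c)⁻¹ • c) (by simp [h0])
    simp only [map_smul, LinearMap.smul_apply, smul_eq_mul] at this
    calc energyForm D c c
        = totalMass c ^ 2 * ((totalMass c)⁻¹ * ((totalMass c)⁻¹ * energyForm D c c)) := by
          field_simp
      _ ≤ totalMass c ^ 2 * M := by gcongr
      _ = M * totalMass c ^ 2 := mul_comm _ _

theorem posSemidef_of_energyForm_le {D : X → X → ℝ} (hD : ∀ x y, D x y = D y x) {M : ℝ}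
    (hM : ∀ c, totalMass c = 1 → energyForm D c c ≤ M) :
    (Matrix.of fun x y => (M - D x y) / 2).PosSemidef := by
  refine ⟨Matrix.IsHermitian.ext fun x y => by simp [hD], fun c => ?_⟩
  have hquad : (c.sum fun x a => c.sum fun y b => a * ((M - D x y) / 2) * b) =
      (M * totalMass c ^ 2 - energyForm D c c) / 2 := by
    simp only [totalMass_apply, energyForm_apply, Finsupp.sum]
    rw [sq, Finset.sum_mul_sum, Finset.mul_sum, ← Finset.sum_sub_distrib, Finset.sum_div]
    refine Finset.sum_congr rfl fun x _ => ?_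
    rw [Finset.mul_sum, ← Finset.sum_sub_distrib, Finset.sum_div]
    exact Finset.sum_congr rfl fun y _ => by ring
  simp only [Matrix.of_apply, star_trivial, hquad]
  linarith [energyForm_le_mul_totalMass_sq hM c]

end Energy

section PosPartMeasure

variable {X : Type*} [MeasurableSpace X]

noncomputable def posPartMeasure (c : X →₀ ℝ) : Measure X :=
  c.sum fun x a => ENNReal.ofReal a • Measure.dirac x

instance (c : X →₀ ℝ) : IsFiniteMeasure (posPartMeasure c) :=
  ⟨by simp [posPartMeasure, Finsupp.sum, Measure.finsetSum_apply, ENNReal.sum_lt_top]⟩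

theorem toReal_posPartMeasure_univ (c : X →₀ ℝ) :
    (posPartMeasure c univ).toReal = c.sum fun _ a => max a 0 := by
  simp [posPartMeasure, Finsupp.sum, Measure.finsetSum_apply, ENNReal.toReal_sum,
    ENNReal.toReal_ofReal']

theorem toReal_posPartMeasure_univ_sub (c : X →₀ ℝ) :
    (posPartMeasure c univ).toReal - (posPartMeasure (-c) univ).toReal = totalMass c := by
  rw [toReal_posPartMeasure_univ, toReal_posPartMeasure_univ, sum_neg_index (by simp),
    totalMass_apply, Finsupp.sum, Finsupp.sum, Finsupp.sum, ← Finset.sum_sub_distrib]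
  simp_rw [max_zero_sub_max_neg_zero_eq_self]

variable [MeasurableSingletonClass X]

theorem integral_posPartMeasure (c : X →₀ ℝ) (f : X → ℝ) :
    ∫ x, f x ∂posPartMeasure c = c.sum fun x a => max a 0 * f x := by
  rw [posPartMeasure, Finsupp.sum, integral_finsetSum_measure fun x _ =>
    (integrable_dirac enorm_lt_top).smul_measure ENNReal.ofReal_ne_top]
  simp [integral_smul_measure, integral_dirac, ENNReal.toReal_ofReal', Finsupp.sum]

theorem integral_integral_posPartMeasure (D : X → X → ℝ) (c c' : X →₀ ℝ) :
    ∫ x, ∫ y, D x y ∂posPartMeasure c' ∂posPartMeasure c =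
      c.sum fun x a => c'.sum fun y b => max a 0 * D x y * max b 0 := by
  simp only [integral_posPartMeasure, Finsupp.mul_sum]
  exact Finsupp.sum_congr fun x _ => Finsupp.sum_congr fun y _ => by ring

theorem energyForm_eq_integral {D : X → X → ℝ} (hD : ∀ x y, D x y = D y x) (c : X →₀ ℝ) :
    energyForm D c c =
      (∫ x, ∫ y, D x y ∂posPartMeasure c ∂posPartMeasure c) +
        (∫ x, ∫ y, D x y ∂posPartMeasure (-c) ∂posPartMeasure (-c)) -
          2 * ∫ x, ∫ y, D x y ∂posPartMeasure (-c) ∂posPartMeasure c := by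
  simp only [integral_integral_posPartMeasure, energyForm_apply, Finsupp.sum, Finsupp.support_neg,
    Finsupp.coe_neg, Pi.neg_apply]
  have hswap : ∑ x ∈ c.support, ∑ y ∈ c.support, max (c x) 0 * D x y * max (-c y) 0 =
      ∑ x ∈ c.support, ∑ y ∈ c.support, max (-c x) 0 * D x y * max (c y) 0 := by
    rw [Finset.sum_comm]
    exact Finset.sum_congr rfl fun x _ => Finset.sum_congr rfl fun y _ => by rw [hD]; ring
  rw [two_mul]
  nth_rw 2 [hswap]
  simp only [← Finset.sum_add_distrib, ← Finset.sum_sub_distrib]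
  refine Finset.sum_congr rfl fun x _ => Finset.sum_congr rfl fun y _ => ?_
  conv_lhs =>
    rw [← max_zero_sub_max_neg_zero_eq_self (c x), ← max_zero_sub_max_neg_zero_eq_self (c y)]
  ring

end PosPartMeasure

theorem embedding_on_sphere_of_M_finite
    {X : Type*} [MetricSpace X] [CompactSpace X]
    [MeasurableSpace X] [BorelSpace X]
    (S : Set ℝ)
    (hS : S = {r : ℝ | ∃ P N : Measure X, IsFiniteMeasure P ∧ IsFiniteMeasure N ∧
      (P Set.univ).toReal - (N Set.univ).toReal = 1 ∧
      r = (∫ a, ∫ b, dist a b ∂P ∂P) + (∫ a, ∫ b, dist a b ∂N ∂N)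
            - 2 * (∫ a, ∫ b, dist a b ∂N ∂P)})
    (hfin : BddAbove S) :
    ∃ i : X → lp (fun _ : ℕ => ℝ) 2,
      (∀ x : X, ‖i x‖ = Real.sqrt (sSup S / 2)) ∧
      (∀ x y : X, ‖i x - i y‖ ^ 2 = dist x y) := by
  set M := sSup S
  have hM : ∀ c : X →₀ ℝ, totalMass c = 1 → energyForm dist c c ≤ M := fun c hc =>
    le_csSup hfin <| hS ▸ ⟨posPartMeasure c, posPartMeasure (-c), inferInstance, inferInstance,
      (toReal_posPartMeasure_univ_sub c).trans hc, energyForm_eq_integral dist_comm c⟩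
  obtain ⟨i, hi⟩ := (posSemidef_of_energyForm_le dist_comm hM).exists_lp_inner_eq
    (by simp only [Matrix.of_apply]; fun_prop)
  have hnorm : ∀ x, ‖i x‖ ^ 2 = M / 2 := fun x => by
    rw [← real_inner_self_eq_norm_sq, hi]
    simp
  refine ⟨i, fun x => by rw [← hnorm x, Real.sqrt_sq (norm_nonneg _)], fun x y => ?_⟩
  rw [norm_sub_sq_real, hnorm, hnorm, hi]
  simp only [Matrix.of_apply]
  ring
end

section
/- Every metric space with at most 3 points is hypermetric. -/
/-!
Grouping the points of `a` and `b` by multiplicity turns the inequality into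
`∑ x, ∑ y, e x * e y * dist x y ≤ 0` for the integer weights `e x = #b⁻¹{x} - #a⁻¹{x}`, which
sum to `1`. On at most three points there is a `z` such that the other points all have weight
`≥ 1` or all have weight `≤ 0`; in the first case (in the second, after replacing `e` by `-e`)
each such weight `e x` is nonnegative and at least `∑ e`. The triangle inequality through `z`
then bounds the form by `2 * ∑ x, e x * (∑ e - e x) * dist x z ≤ 0`.
-/

open Finset

section Multiplicity

variable {ι X R : Type*} [Fintype ι] [Fintype X] [DecidableEq X] [NonAssocSemiring R]

theorem sum_comp_eq_sum_card_fiber_mul (a : ι → X) (f : X → R) :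
    ∑ i, f (a i) = ∑ x, (#{i | a i = x} : R) * f x := by
  rw [← sum_fiberwise' univ a f]
  simp only [sum_const, nsmul_eq_mul]

theorem sum_card_fiber (a : ι → X) : ∑ x, (#{i | a i = x} : R) = Fintype.card ι := by
  simpa using (sum_comp_eq_sum_card_fiber_mul (R := R) a fun _ ↦ 1).symm

end Multiplicity

theorem exists_forall_ne_or_forall_ne_not_of_card_le_three {α : Type*} [Fintype α] [Nonempty α]
    (hα : Fintype.card α ≤ 3) (P : α → Prop) :
    ∃ z, (∀ x ≠ z, P x) ∨ (∀ x ≠ z, ¬ P x) := by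
  classical
  have hsplit : #{x | P x} + #{x | ¬ P x} = Fintype.card α :=
    card_filter_add_card_filter_not P
  rcases (by omega : #{x | ¬ P x} ≤ 1 ∨ #{x | P x} ≤ 1) with hsmall | hsmall
  all_goals obtain ⟨z, hz⟩ := card_le_one_iff_subset_singleton.1 hsmall
  · exact ⟨z, Or.inl fun x hx ↦ by_contra fun hPx ↦ hx (mem_singleton.1 (hz (by simpa)))⟩
  · exact ⟨z, Or.inr fun x hx hPx ↦ hx (mem_singleton.1 (hz (by simpa)))⟩

section WeightedDistances

variable {X : Type*} [PseudoMetricSpace X] [Fintype X]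

theorem sum_sum_mul_dist_le_of_forall_ne_nonneg (e : X → ℝ) (z : X) (he : ∀ x ≠ z, 0 ≤ e x) :
    ∑ x, ∑ y, e x * e y * dist x y ≤ 2 * ∑ x, e x * (∑ y, e y - e x) * dist x z := by
  classical
  -- On the diagonal `dist x x = 0`, and the triangle bound through `z` overshoots by the `if` term.
  have termwise : ∀ x y, e x * e y * dist x y ≤
      e x * e y * (dist x z + dist y z) - if x = y then 2 * e x ^ 2 * dist x z else 0 := by
    intro x y
    by_cases hxy : x = y
    · subst hxy
      rw [if_pos rfl, dist_self]
      exact le_of_eq (by ring)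
    by_cases hx : x = z
    · subst hx; simp [hxy, dist_comm]
    by_cases hy : y = z
    · subst hy; simp [hxy]
    rw [if_neg hxy, sub_zero]
    exact mul_le_mul_of_nonneg_left (dist_triangle_right x y z)
      (mul_nonneg (he x hx) (he y hy))
  calc ∑ x, ∑ y, e x * e y * dist x y
      ≤ ∑ x, ∑ y, (e x * e y * (dist x z + dist y z) -
          if x = y then 2 * e x ^ 2 * dist x z else 0) :=
        sum_le_sum fun x _ ↦ sum_le_sum fun y _ ↦ termwise x y
    _ = ∑ x, (2 * (e x * (∑ y, e y) * dist x z) - 2 * e x ^ 2 * dist x z) := by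
        have row : ∀ x, ∑ y, e x * e y * dist x z = e x * (∑ y, e y) * dist x z := fun x ↦ by
          rw [mul_sum, sum_mul]
        have column : ∑ x, ∑ y, e x * e y * dist y z = ∑ x, e x * (∑ y, e y) * dist x z := by
          rw [sum_comm]
          exact sum_congr rfl fun y _ ↦ by rw [← row]; exact sum_congr rfl fun x _ ↦ by ring
        simp only [sum_sub_distrib, sum_ite_eq, mem_univ, if_true, mul_add, sum_add_distrib, row,
          column, ← mul_sum]
        ring
    _ = 2 * ∑ x, e x * (∑ y, e y - e x) * dist x z := by
        rw [mul_sum]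
        exact sum_congr rfl fun x _ ↦ by ring

theorem sum_sum_mul_dist_nonpos_of_forall_ne (e : X → ℝ) (z : X)
    (he : ∀ x ≠ z, 0 ≤ e x ∧ ∑ y, e y ≤ e x) :
    ∑ x, ∑ y, e x * e y * dist x y ≤ 0 := by
  refine (sum_sum_mul_dist_le_of_forall_ne_nonneg e z fun x hx ↦ (he x hx).1).trans ?_
  have term_nonpos : ∀ x, e x * (∑ y, e y - e x) * dist x z ≤ 0 := by
    intro x
    by_cases hx : x = z
    · simp [hx]
    · exact mul_nonpos_of_nonpos_of_nonneg
        (mul_nonpos_of_nonneg_of_nonpos (he x hx).1 (sub_nonpos.2 (he x hx).2)) dist_nonneg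
  exact mul_nonpos_of_nonneg_of_nonpos zero_le_two (sum_nonpos fun x _ ↦ term_nonpos x)

theorem sum_sum_mul_dist_nonpos_of_card_le_three [Nonempty X] (hX : Fintype.card X ≤ 3)
    (e : X → ℤ) (he : ∑ x, e x = 1) :
    ∑ x, ∑ y, (e x : ℝ) * e y * dist x y ≤ 0 := by
  have he' : ∑ x, (e x : ℝ) = 1 := by exact_mod_cast he
  obtain ⟨z, hpos | hnonpos⟩ :=
    exists_forall_ne_or_forall_ne_not_of_card_le_three hX fun x ↦ 1 ≤ e x
  · refine sum_sum_mul_dist_nonpos_of_forall_ne _ z fun x hx ↦ ⟨?_, ?_⟩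
    · exact_mod_cast zero_le_one.trans (hpos x hx)
    · rw [he']; exact_mod_cast hpos x hx
  · have hle : ∀ x ≠ z, e x ≤ 0 := fun x hx ↦ by have := hnonpos x hx; omega
    have := sum_sum_mul_dist_nonpos_of_forall_ne (fun x ↦ -(e x : ℝ)) z fun x hx ↦ ⟨?_, ?_⟩
    · simpa using this
    · simpa using hle x hx
    · rw [sum_neg_distrib, he', neg_le_neg_iff]
      exact_mod_cast (hle x hx).trans zero_le_one

theorem sum_sum_sub_mul_sub_mul_dist (e f : X → ℝ) :
    ∑ x, ∑ y, (f x - e x) * (f y - e y) * dist x y =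
      ∑ x, ∑ y, e x * e y * dist x y + ∑ x, ∑ y, f x * f y * dist x y -
        2 * ∑ x, ∑ y, e x * f y * dist x y := by
  have swap : ∑ x, ∑ y, f x * e y * dist x y = ∑ x, ∑ y, e x * f y * dist x y := by
    rw [sum_comm]
    exact sum_congr rfl fun x _ ↦ sum_congr rfl fun y _ ↦ by rw [dist_comm]; ring
  simp only [sub_mul, mul_sub, sum_sub_distrib]
  linarith

theorem sum_sum_dist_comp [DecidableEq X] {ι κ : Type*} [Fintype ι] [Fintype κ]
    (a : ι → X) (b : κ → X) :
    ∑ i, ∑ j, dist (a i) (b j) =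
      ∑ x, ∑ y, (#{i | a i = x} : ℝ) * #{j | b j = y} * dist x y := by
  rw [sum_comp_eq_sum_card_fiber_mul a fun x ↦ ∑ j, dist x (b j)]
  refine sum_congr rfl fun x _ ↦ ?_
  rw [sum_comp_eq_sum_card_fiber_mul b (dist x), mul_sum]
  exact sum_congr rfl fun y _ ↦ by ring

end WeightedDistances

theorem three_point_spaces_are_hypermetric
    {X : Type*} [MetricSpace X] [Fintype X] (hcard : Fintype.card X ≤ 3) :
    ∀ (n : ℕ) (a : Fin n → X) (b : Fin (n + 1) → X),
      (∑ i, ∑ j, dist (a i) (a j)) + (∑ i, ∑ j, dist (b i) (b j))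
        ≤ 2 * ∑ i, ∑ j, dist (a i) (b j) := by
  intro n a b
  have : DecidableEq X := Classical.decEq X
  have : Nonempty X := ⟨b 0⟩
  let e : X → ℤ := fun x ↦ #{j | b j = x} - #{i | a i = x}
  have he : ∑ x, e x = 1 := by
    simp only [e, sum_sub_distrib, sum_card_fiber, Fintype.card_fin]
    omega
  have key := sum_sum_mul_dist_nonpos_of_card_le_three hcard e he
  push_cast [e] at key
  rw [sum_sum_sub_mul_sub_mul_dist] at key
  rw [sum_sum_dist_comp a a, sum_sum_dist_comp b b, sum_sum_dist_comp a b]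
  linarith
end

section
/- Let X = {x₁,…,xₙ} (n ≥ 2) be a finite quasihypermetric space with distance matrix D = (d(xᵢ,xⱼ)). Suppose w ∈ ℝⁿ solves Dw = 𝟏 and w₀ := Σᵢ wᵢ ≠ 0. Then M(X) = 1/w₀; that is, Σᵢⱼ αᵢαⱼ d(xᵢ,xⱼ) ≤ 1/w₀ for all real α with Σαᵢ = 1, with equality at α = w/w₀. -/
/-!
For `v := w / w₀` the equation `D v = (1 / w₀) 𝟏` makes the pairing `αᵀ D v` equal to `1 / w₀` for
every `α` with `∑ α = 1`, in particular `vᵀ D v = 1 / w₀`. Expanding the quasihypermetric inequality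
for `β := α - v`, which has `∑ β = 0`, gives `αᵀ D α - 1 / w₀ = βᵀ D β ≤ 0`.
-/

open Finset

namespace QuasiHypermetric

variable {X : Type*} [Fintype X]

def energy (d : X → X → ℝ) (α β : X → ℝ) : ℝ := ∑ a, ∑ b, α a * β b * d a b

lemma energy_sub_sub (d : X → X → ℝ) (α γ : X → ℝ) :
    energy d (α - γ) (α - γ) =
      energy d α α - energy d α γ - energy d γ α + energy d γ γ := by
  simp only [energy, Pi.sub_apply, ← sum_sub_distrib, ← sum_add_distrib]
  refine sum_congr rfl fun a _ => sum_congr rfl fun b _ => ?_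
  ring

lemma energy_comm {d : X → X → ℝ} (hd : ∀ a b, d a b = d b a) (α β : X → ℝ) :
    energy d α β = energy d β α := by
  rw [energy, energy, sum_comm]
  refine sum_congr rfl fun a _ => sum_congr rfl fun b _ => ?_
  rw [hd]
  ring

lemma energy_eq_of_forall_sum_mul_eq {d : X → X → ℝ} {v : X → ℝ} {c : ℝ}
    (hv : ∀ a, ∑ b, d a b * v b = c) (α : X → ℝ) :
    energy d α v = c * ∑ a, α a := by
  rw [energy, mul_sum]
  refine sum_congr rfl fun a _ => ?_
  rw [← hv a, sum_mul]
  refine sum_congr rfl fun b _ => ?_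
  ring

theorem energy_le_of_forall_sum_mul_eq {d : X → X → ℝ} (hd : ∀ a b, d a b = d b a)
    (hqhm : ∀ β : X → ℝ, ∑ a, β a = 0 → energy d β β ≤ 0)
    {v : X → ℝ} {c : ℝ} (hv : ∀ a, ∑ b, d a b * v b = c) (hv₁ : ∑ a, v a = 1)
    {α : X → ℝ} (hα : ∑ a, α a = 1) :
    energy d α α ≤ c := by
  have hαv : energy d α v = c := by rw [energy_eq_of_forall_sum_mul_eq hv, hα, mul_one]
  have hvv : energy d v v = c := by rw [energy_eq_of_forall_sum_mul_eq hv, hv₁, mul_one]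
  have hβ : ∑ a, (α - v) a = 0 := by simp only [Pi.sub_apply, sum_sub_distrib, hα, hv₁, sub_self]
  have := hqhm (α - v) hβ
  rw [energy_sub_sub, energy_comm hd v α, hαv, hvv] at this
  linarith

end QuasiHypermetric

open QuasiHypermetric in
theorem finite_qhm_M_eq_inv_w0_general
    {X : Type*} [MetricSpace X] [Fintype X]
    (hqhm : ∀ β : X → ℝ, (∑ a, β a) = 0 →
      ∑ a, ∑ b, β a * β b * dist a b ≤ 0)
    (w : X → ℝ) (hw : ∀ a : X, ∑ b, dist a b * w b = 1)
    (w₀ : ℝ) (hw₀ : w₀ = ∑ a, w a) (hne : w₀ ≠ 0) :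
    (∀ α : X → ℝ, (∑ a, α a) = 1 →
        ∑ a, ∑ b, α a * α b * dist a b ≤ 1 / w₀) ∧
    (∑ a, ∑ b, (w a / w₀) * (w b / w₀) * dist a b) = 1 / w₀ := by
  set v : X → ℝ := fun a => w a / w₀
  have hv : ∀ a, ∑ b, dist a b * v b = 1 / w₀ := fun a => by
    simp only [v, mul_div_assoc', ← sum_div, hw a]
  have hv₁ : ∑ a, v a = 1 := by rw [← sum_div, ← hw₀, div_self hne]
  refine ⟨fun α hα => energy_le_of_forall_sum_mul_eq dist_comm hqhm hv hv₁ hα, ?_⟩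
  change energy dist v v = 1 / w₀
  rw [energy_eq_of_forall_sum_mul_eq hv, hv₁, mul_one]

theorem finite_qhm_M_eq_inv_w0
    {X : Type*} [MetricSpace X] [Fintype X] (hcard : 2 ≤ Fintype.card X)
    (hqhm : ∀ β : X → ℝ, (∑ a, β a) = 0 →
      ∑ a, ∑ b, β a * β b * dist a b ≤ 0)
    (w : X → ℝ) (hw : ∀ a : X, ∑ b, dist a b * w b = 1)
    (w₀ : ℝ) (hw₀ : w₀ = ∑ a, w a) (hne : w₀ ≠ 0) :
    (∀ α : X → ℝ, (∑ a, α a) = 1 →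
        ∑ a, ∑ b, α a * α b * dist a b ≤ 1 / w₀) ∧
    (∑ a, ∑ b, (w a / w₀) * (w b / w₀) * dist a b) = 1 / w₀ :=
  finite_qhm_M_eq_inv_w0_general hqhm w hw w₀ hw₀ hne
end

section
/- Let X = {x₁,…,xₙ} (n ≥ 2) be a finite quasihypermetric space with distance matrix D. If there exists w ∈ ℝⁿ with Dw = 𝟏 and Σᵢ wᵢ = 0, then M(X) = ∞: the quadratic form Σᵢⱼ αᵢαⱼ d(xᵢ,xⱼ) is unbounded above over vectors α with Σαᵢ = 1. -/
/-!
Along the line `α = μ + t • w` through any mass-one vector `μ`, the condition `D w = 𝟏` makes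
the cross terms contribute `2 t Σ μ = 2 t`, while the quadratic term is `t² · wᵀ D w = t² Σ w = 0`.
So the form is affine in `t` with slope `2` and takes arbitrarily large values on mass-one vectors.
-/

open Finset

section QuadForm

variable {ι : Type*} [Fintype ι]

def quadForm (d : ι → ι → ℝ) (α : ι → ℝ) : ℝ := ∑ a, ∑ b, α a * α b * d a b

lemma quadForm_add_smul {d : ι → ι → ℝ} (hd : ∀ a b, d a b = d b a) (μ w : ι → ℝ) (t : ℝ) :
    quadForm d (μ + t • w) =
      quadForm d μ + 2 * t * ∑ a, ∑ b, μ a * w b * d a b + t ^ 2 * quadForm d w := by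
  have hcross : ∑ a, ∑ b, w a * μ b * d a b = ∑ a, ∑ b, μ a * w b * d a b := by
    rw [sum_comm]
    exact sum_congr rfl fun a _ => sum_congr rfl fun b _ => by rw [hd]; ring
  have hsplit : ∀ a b, (μ + t • w) a * (μ + t • w) b * d a b
      = μ a * μ b * d a b + t * (μ a * w b * d a b) + t * (w a * μ b * d a b)
        + t ^ 2 * (w a * w b * d a b) := fun a b => by
    simp only [Pi.add_apply, Pi.smul_apply, smul_eq_mul]
    ring
  simp only [quadForm, hsplit, sum_add_distrib, ← mul_sum, hcross]
  ring

lemma quadForm_add_smul_of_mulVec_eq_one {d : ι → ι → ℝ} (hd : ∀ a b, d a b = d b a)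
    {w : ι → ℝ} (hw : ∀ a, ∑ b, d a b * w b = 1) (hmass : ∑ a, w a = 0) (μ : ι → ℝ) (t : ℝ) :
    quadForm d (μ + t • w) = quadForm d μ + 2 * t * ∑ a, μ a := by
  have hrow : ∀ v : ι → ℝ, ∑ a, ∑ b, v a * w b * d a b = ∑ a, v a := fun v =>
    sum_congr rfl fun a _ => calc
      ∑ b, v a * w b * d a b = v a * ∑ b, d a b * w b := by
        rw [mul_sum]
        exact sum_congr rfl fun b _ => by ring
      _ = v a := by rw [hw a, mul_one]
  have hquad_w : quadForm d w = 0 := (hrow w).trans hmass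
  rw [quadForm_add_smul hd, hrow, hquad_w]
  ring

lemma exists_sum_eq_one_lt_quadForm [Nonempty ι] {d : ι → ι → ℝ} (hd : ∀ a b, d a b = d b a)
    {w : ι → ℝ} (hw : ∀ a, ∑ b, d a b * w b = 1) (hmass : ∑ a, w a = 0) (M : ℝ) :
    ∃ α : ι → ℝ, ∑ a, α a = 1 ∧ M < quadForm d α := by
  classical
  let i : ι := Classical.arbitrary ι
  have hμ : ∑ a, Pi.single i (1 : ℝ) a = 1 := by simp
  obtain ⟨t, ht⟩ := exists_gt ((M - quadForm d (Pi.single i 1)) / 2)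
  refine ⟨Pi.single i 1 + t • w, ?_, ?_⟩
  · simp only [Pi.add_apply, Pi.smul_apply, smul_eq_mul, sum_add_distrib, ← mul_sum, hμ, hmass]
    ring
  · rw [quadForm_add_smul_of_mulVec_eq_one hd hw hmass, hμ]
    linarith

end QuadForm

theorem finite_qhm_M_infinite_of_mass_zero_solution_general
    {X : Type*} [MetricSpace X] [Fintype X] (hcard : 2 ≤ Fintype.card X)
    (w : X → ℝ) (hw : ∀ a : X, ∑ b, dist a b * w b = 1)
    (hmass : (∑ a, w a) = 0) :
    ¬ BddAbove {s : ℝ | ∃ α : X → ℝ, (∑ a, α a) = 1 ∧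
        s = ∑ a, ∑ b, α a * α b * dist a b} := by
  have : Nonempty X := Fintype.card_pos_iff.mp (by omega)
  rintro ⟨M, hM⟩
  obtain ⟨α, hα, hlt⟩ := exists_sum_eq_one_lt_quadForm dist_comm hw hmass M
  exact (hM ⟨α, hα, rfl⟩).not_gt hlt

theorem finite_qhm_M_infinite_of_mass_zero_solution
    {X : Type*} [MetricSpace X] [Fintype X] (hcard : 2 ≤ Fintype.card X)
    (hqhm : ∀ β : X → ℝ, (∑ a, β a) = 0 →
      ∑ a, ∑ b, β a * β b * dist a b ≤ 0)
    (w : X → ℝ) (hw : ∀ a : X, ∑ b, dist a b * w b = 1)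
    (hmass : (∑ a, w a) = 0) :
    ¬ BddAbove {s : ℝ | ∃ α : X → ℝ, (∑ a, α a) = 1 ∧
        s = ∑ a, ∑ b, α a * α b * dist a b} :=
  finite_qhm_M_infinite_of_mass_zero_solution_general hcard w hw hmass
end
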